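/- Let n ≥ 1 and let λ ∈ ℂ with λ ≠ 0 and φ_n(λ) = 0. Then K_{n−1}(λ, conj(λ)^{−1}) = e_n · λ^{1−n} · φ̂_n'(λ) · φ̂*_n(λ), where φ̂_n' is the derivative of the orthonormal polynomial φ̂_n. -/

import Mathlib

open LaurentPolynomial Polynomial Complex ComplexConjugate

noncomputable section

/-- Reversed polynomial with conjugated coefficients: p*(z) = Σ conj(c_{m-k}) z^k. -/
def revc (p : Polynomial ℂ) : Polynomial ℂ := (p.map (starRingEnd ℂ)).reverse

/-- Monic orthogonal polynomials from Schur parameters: φ_0 = 1,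
φ_n = z φ_{n-1} + a_n φ*_{n-1}. -/
def phi (a : ℕ → ℂ) : ℕ → Polynomial ℂ
  | 0 => 1
  | n + 1 => X * phi a n + Polynomial.C (a (n + 1)) * revc (phi a n)

/-- ρ_n := |1 - |a_n|²|^{1/2}. -/
def rho (a : ℕ → ℂ) (n : ℕ) : ℝ := Real.sqrt |1 - ‖a n‖ ^ 2|

/-- ε_n := sgn (1 - |a_n|²). -/
def sgn (a : ℕ → ℂ) (n : ℕ) : ℝ := Real.sign (1 - ‖a n‖ ^ 2)

/-- ρ̂_n := ε_n ρ_n. -/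
def rhoh (a : ℕ → ℂ) (n : ℕ) : ℝ := sgn a n * rho a n

/-- κ_n := Π_{k=1}^n ρ_k⁻¹ (κ_0 = 1). -/
def kap (a : ℕ → ℂ) (n : ℕ) : ℝ := ∏ k ∈ Finset.Icc 1 n, (rho a k)⁻¹

/-- e_n := Π_{k=1}^n ε_k (e_0 = 1). -/
def esgn (a : ℕ → ℂ) (n : ℕ) : ℝ := ∏ k ∈ Finset.Icc 1 n, sgn a k

/-- Orthonormal polynomials φ̂_n := κ_n φ_n. -/
def phin (a : ℕ → ℂ) (n : ℕ) : Polynomial ℂ := Polynomial.C ((kap a n : ℝ) : ℂ) * phi a n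

/-- Standard right orthonormal Laurent polynomials:
χ_{2m} = z^{-m} φ̂*_{2m}, χ_{2m+1} = z^{-m} φ̂_{2m+1}. -/
def chi (a : ℕ → ℂ) (n : ℕ) : LaurentPolynomial ℂ :=
  T (-((n / 2 : ℕ) : ℤ)) * (if Even n then revc (phin a n) else phin a n).toLaurent

/-- The kernel K_n(z,y) := Σ_{k=0}^n e_k φ̂_k(z) conj(φ̂_k(y)). -/
def Kker (a : ℕ → ℂ) (n : ℕ) (z y : ℂ) : ℂ :=
  ∑ k ∈ Finset.range (n + 1),
    ((esgn a k : ℝ) : ℂ) * (phin a k).eval z * conj ((phin a k).eval y)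

/-- Entries of the five-diagonal matrix, with rows/columns indexed from 1. -/
def Fent (a : ℕ → ℂ) (i j : ℕ) : ℂ :=
  if i = 1 then
    if j = 1 then -a 1 else if j = 2 then (rho a 1 : ℂ) else 0
  else if i % 2 = 0 then
    if j + 1 = i then -(rhoh a (i - 1) : ℂ) * a i
    else if j = i then -conj (a (i - 1)) * a i
    else if j = i + 1 then -(rho a i : ℂ) * a (i + 1)
    else if j = i + 2 then (rho a i : ℂ) * (rho a (i + 1) : ℂ)
    else 0
  else
    if j + 2 = i then (rhoh a (i - 2) : ℂ) * (rhoh a (i - 1) : ℂ)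
    else if j + 1 = i then conj (a (i - 2)) * (rhoh a (i - 1) : ℂ)
    else if j = i then -conj (a (i - 1)) * a i
    else if j = i + 1 then conj (a (i - 1)) * (rho a i : ℂ)
    else 0

/-- The n×n five-diagonal matrix ℱ_n. -/
def Fmat (a : ℕ → ℂ) (n : ℕ) : Matrix (Fin n) (Fin n) ℂ :=
  Matrix.of fun i j => Fent a (i.val + 1) (j.val + 1)

/-- Evaluation of a Laurent polynomial at a nonzero complex number. -/
def levalAt (z : ℂ) (f : LaurentPolynomial ℂ) : ℂ :=
  Finsupp.sum f.coeff fun k c => c * z ^ k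


/-
Let W(p) := p* p' − (p*)' p, the Wronskian of p* and p. From φ_{n+1} = zφ_n + a_{n+1}φ*_n and
φ*_{n+1} = φ*_n + conj(a_{n+1}) zφ_n one gets
  W(φ_{n+1}) = (1 − |a_{n+1}|²)(φ_n φ*_n + z W(φ_n)),
and the weights c_n := e_n κ_n² satisfy c_{n+1}(1 − |a_{n+1}|²) = c_n. This telescopes to the
diagonal Christoffel–Darboux identity
  c_n W(φ_n) = Σ_{k<n} z^{n−1−k} c_k φ_k φ*_k.
At a zero λ of φ_n the left side is c_n φ*_n(λ) φ_n'(λ). Since φ*_k(λ) = λ^k conj(φ_k(conj(λ)⁻¹)),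
λ^{1−n} times the k-th summand is the k-th term of K_{n−1}(λ, conj(λ)⁻¹).
-/

open Finset

section Revc

lemma map_conj_map_conj (p : ℂ[X]) : (p.map (starRingEnd ℂ)).map (starRingEnd ℂ) = p := by
  ext; simp

lemma natDegree_map_conj (p : ℂ[X]) : (p.map (starRingEnd ℂ)).natDegree = p.natDegree :=
  natDegree_map_eq_of_injective (RingHom.injective _) p

lemma revc_eq_reflect (p : ℂ[X]) : revc p = reflect p.natDegree (p.map (starRingEnd ℂ)) := by
  rw [revc, reverse, natDegree_map_conj]

lemma natDegree_revc_le (p : ℂ[X]) : (revc p).natDegree ≤ p.natDegree :=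
  (reverse_natDegree_le _).trans (natDegree_map_conj p).le

lemma revc_one : revc 1 = 1 := by
  rw [revc, Polynomial.map_one, ← C_1, reverse_C]

lemma revc_C_mul (c : ℂ) (p : ℂ[X]) :
    revc (Polynomial.C c * p) = Polynomial.C (conj c) * revc p := by
  simp [revc, reverse_mul_of_domain]

lemma eval_revc (p : ℂ[X]) {z : ℂ} (hz : z ≠ 0) :
    (revc p).eval z = z ^ p.natDegree * conj (p.eval (conj z)⁻¹) := by
  have : Invertible z⁻¹ := invertibleOfNonzero (inv_ne_zero hz)
  have h := eval₂_reverse_mul_pow (RingHom.id ℂ) z⁻¹ (p.map (starRingEnd ℂ))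
  have hinv : z⁻¹ = conj (conj z)⁻¹ := by simp
  rw [invOf_eq_inv, inv_inv, eval₂_id, eval₂_id, natDegree_map_conj, eval_map, hinv,
    eval₂_at_apply, ← hinv] at h
  rw [revc, ← h, mul_left_comm, ← mul_pow, mul_inv_cancel₀ hz, one_pow, mul_one]

end Revc

section Phi

variable (a : ℕ → ℂ)

lemma phi_succ (n : ℕ) :
    phi a (n + 1) = X * phi a n + Polynomial.C (a (n + 1)) * revc (phi a n) := rfl

lemma phi_monic_and_natDegree : ∀ n, (phi a n).Monic ∧ (phi a n).natDegree = n
  | 0 => ⟨monic_one, natDegree_one⟩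
  | n + 1 => by
    obtain ⟨hmonic, hdeg⟩ := phi_monic_and_natDegree n
    have hX : (X * phi a n).natDegree = n + 1 := by
      rw [monic_X.natDegree_mul hmonic, natDegree_X, hdeg, add_comm]
    have hlt : (Polynomial.C (a (n + 1)) * revc (phi a n)).natDegree < (X * phi a n).natDegree := by
      rw [hX]
      exact Nat.lt_succ_of_le ((natDegree_C_mul_le _ _).trans ((natDegree_revc_le _).trans hdeg.le))
    rw [phi_succ]
    exact ⟨(monic_X.mul hmonic).add_of_left (degree_lt_degree hlt),
      by rw [natDegree_add_eq_left_of_natDegree_lt hlt, hX]⟩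

lemma natDegree_phi (n : ℕ) : (phi a n).natDegree = n := (phi_monic_and_natDegree a n).2

lemma revc_phi_succ (n : ℕ) :
    revc (phi a (n + 1)) = revc (phi a n) + Polynomial.C (conj (a (n + 1))) * (X * phi a n) := by
  have hdeg := natDegree_phi a n
  have hX : reflect (1 + n) (X * (phi a n).map (starRingEnd ℂ)) = revc (phi a n) := by
    rw [reflect_mul (F := 1) (G := n) _ _ natDegree_X_le (by rw [natDegree_map_conj, hdeg]),
      reflect_one_X, one_mul, revc_eq_reflect, hdeg]
  have hrevc : reflect (1 + n) ((revc (phi a n)).map (starRingEnd ℂ)) = X * phi a n := by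
    rw [revc_eq_reflect, hdeg, reflect_map _ (phi a n), map_conj_map_conj,
      ← one_mul (reflect n _),
      reflect_mul (F := 1) (G := n) _ _ (by simp) (natDegree_reflect_le.trans (by simp [hdeg])),
      reflect_reflect, reflect_one, pow_one]
  rw [revc_eq_reflect, natDegree_phi, phi_succ, Polynomial.map_add, Polynomial.map_mul,
    Polynomial.map_mul, Polynomial.map_X, map_C, reflect_add, reflect_C_mul, add_comm n 1, hX,
    hrevc]

lemma wronskian_phi_succ (n : ℕ) :
    wronskian (revc (phi a (n + 1))) (phi a (n + 1)) =
      Polynomial.C (1 - a (n + 1) * conj (a (n + 1))) *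
        (phi a n * revc (phi a n) + X * wronskian (revc (phi a n)) (phi a n)) := by
  rw [revc_phi_succ, phi_succ]
  simp only [wronskian, derivative_add, derivative_mul, derivative_X, derivative_C,
    map_sub, map_one, map_mul]
  ring

end Phi

section Weight

variable (a : ℕ → ℂ)

def signedKapSq (n : ℕ) : ℝ := esgn a n * kap a n ^ 2

lemma Real.sign_mul_self_eq_abs (r : ℝ) : Real.sign r * r = |r| := by
  rcases lt_trichotomy r 0 with h | rfl | h
  · rw [Real.sign_of_neg h, abs_of_neg h, neg_one_mul]
  · simp
  · rw [Real.sign_of_pos h, abs_of_pos h, one_mul]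

lemma signedKapSq_succ_mul {n : ℕ} (h : ‖a (n + 1)‖ ≠ 1) :
    signedKapSq a (n + 1) * (1 - ‖a (n + 1)‖ ^ 2) = signedKapSq a n := by
  set T := 1 - ‖a (n + 1)‖ ^ 2
  have hT : |T| ≠ 0 := by
    rw [abs_ne_zero, sub_ne_zero, ne_comm, Ne, pow_eq_one_iff_of_nonneg (norm_nonneg _) two_ne_zero]
    exact h
  have hesgn : esgn a (n + 1) = esgn a n * Real.sign T := prod_Icc_succ_top (by omega) _
  have hkap : kap a (n + 1) = kap a n * (rho a (n + 1))⁻¹ := prod_Icc_succ_top (by omega) _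
  have hrho : rho a (n + 1) ^ 2 = |T| := Real.sq_sqrt (abs_nonneg _)
  calc signedKapSq a (n + 1) * T
      = signedKapSq a n * (Real.sign T * T) * (rho a (n + 1) ^ 2)⁻¹ := by
        rw [signedKapSq, signedKapSq, hesgn, hkap]; ring
    _ = signedKapSq a n := by
        rw [Real.sign_mul_self_eq_abs, hrho, mul_assoc, mul_inv_cancel₀ hT, mul_one]

theorem signedKapSq_mul_wronskian_phi (ha : ∀ k, 1 ≤ k → ‖a k‖ ≠ 1) (n : ℕ) :
    Polynomial.C (signedKapSq a n : ℂ) * wronskian (revc (phi a n)) (phi a n) =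
      ∑ k ∈ range n,
        X ^ (n - 1 - k) * Polynomial.C (signedKapSq a k : ℂ) * (phi a k * revc (phi a k)) := by
  induction n with
  | zero => simp [phi, wronskian, revc_one]
  | succ n ih =>
    have hc : (signedKapSq a (n + 1) : ℂ) * (1 - a (n + 1) * conj (a (n + 1))) =
        signedKapSq a n := by
      rw [← signedKapSq_succ_mul a (ha _ n.succ_pos), Complex.mul_conj']
      push_cast
      rfl
    rw [wronskian_phi_succ, ← mul_assoc, ← C_mul, hc, mul_add, mul_left_comm _ X, ih, mul_sum,
      sum_range_succ, add_comm]
    refine congrArg₂ (· + ·) (sum_congr rfl fun k hk => ?_) (by simp)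
    rw [show n + 1 - 1 - k = n - 1 - k + 1 by have := mem_range.1 hk; omega, pow_succ']
    ring

lemma esgn_mul_eval_phin_mul_conj (k : ℕ) {z : ℂ} (hz : z ≠ 0) :
    (esgn a k : ℂ) * (phin a k).eval z * conj ((phin a k).eval (conj z)⁻¹) =
      (z ^ k)⁻¹ * (signedKapSq a k * ((phi a k).eval z * (revc (phi a k)).eval z)) := by
  have h := eval_revc (phi a k) hz
  rw [natDegree_phi] at h
  simp only [h, phin, eval_mul, eval_C, map_mul, Complex.conj_ofReal, signedKapSq]
  field_simp
  push_cast
  ring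

end Weight

/-- relation (4.1): if λ ≠ 0 is a zero of φ_n, then
K_{n−1}(λ, conj(λ)⁻¹) = e_n λ^{1−n} φ̂_n'(λ) φ̂*_n(λ). -/
theorem kernel_eval_at_zero_of_phi
    (a : ℕ → ℂ) (ha : ∀ n, 1 ≤ n → ‖a n‖ ≠ 1)
    (n : ℕ) (hn : 1 ≤ n) (lam : ℂ) (hlam : lam ≠ 0)
    (hroot : (phi a n).eval lam = 0) :
    Kker a (n - 1) lam ((conj lam)⁻¹) =
      ((esgn a n : ℝ) : ℂ) * lam ^ ((1 : ℤ) - n) *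
        ((Polynomial.derivative (phin a n)).eval lam) * ((revc (phin a n)).eval lam) := by
  have hcd := congrArg (eval lam) (signedKapSq_mul_wronskian_phi a ha n)
  simp only [wronskian, eval_mul, eval_sub, eval_C, hroot, mul_zero, sub_zero,
    eval_finsetSum, eval_pow, eval_X] at hcd
  have hrhs : ((esgn a n : ℝ) : ℂ) * lam ^ ((1 : ℤ) - n) *
      ((derivative (phin a n)).eval lam) * ((revc (phin a n)).eval lam) =
        lam ^ ((1 : ℤ) - n) * (signedKapSq a n *
          ((revc (phi a n)).eval lam * (derivative (phi a n)).eval lam)) := by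
    rw [phin, derivative_C_mul, revc_C_mul, Complex.conj_ofReal, signedKapSq]
    simp only [eval_mul, eval_C]
    push_cast
    ring
  rw [hrhs, hcd, mul_sum, Kker, Nat.sub_add_cancel hn]
  refine sum_congr rfl fun k hk => ?_
  have hpow : lam ^ ((1 : ℤ) - n) * lam ^ (n - 1 - k) = (lam ^ k)⁻¹ := by
    rw [← zpow_natCast, ← zpow_add₀ hlam, ← zpow_natCast, ← zpow_neg]
    have := mem_range.1 hk
    congr 1
    omega
  rw [esgn_mul_eval_phin_mul_conj a k hlam, ← hpow]
  ring
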